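/- Let p be prime, a ∈ F_p^*, H ≤ F_p^* a multiplicative subgroup, and x ∈ F_p^*. If |∑_{u∈H} ∑_{v∈H} e_p(axuv)| ≥ |H|^2 Δ for some Δ > 0, then ∑_{v1,v2,v3 ∈ H} |∑_{u∈H} e_p(axu(v1+v2+v3))| ≥ |H|^4 Δ^3. -/

import Mathlib

open scoped Classical

/-- `ep p z = exp(2πi z/p)`, where `z ∈ F_p` is lifted to `{0,...,p-1}`. -/
noncomputable def ep (p : ℕ) (z : ZMod p) : ℂ :=
  Complex.exp (2 * Real.pi * Complex.I * z.val / p)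

/-!
Multiplication by an element of `H` permutes `H`, so the inner sum `S = ∑_{v ∈ H} e_p(axuv)` does
not depend on `u ∈ H`; the hypothesis therefore says `|S| ≥ |H| Δ`. Expanding the cube,
`∑_{v₁,v₂,v₃} e_p(axu(v₁+v₂+v₃)) = S³` for every `u ∈ H`, and the triangle inequality over the
triples gives `∑_{v₁,v₂,v₃} |∑_u e_p(axu(v₁+v₂+v₃))| ≥ |H| |S|³ ≥ |H|⁴ Δ³`.
-/

open Finset

lemma ep_eq_stdAddChar (p : ℕ) [NeZero p] (z : ZMod p) : ep p z = ZMod.stdAddChar z := by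
  rw [ZMod.stdAddChar_apply, ZMod.toCircle_apply, ep]

lemma norm_sum_le_sum_sum_sum_norm {E ι κ : Type*} [SeminormedAddCommGroup E] [Fintype ι]
    [Fintype κ] (g : κ → ι → ι → ι → E) :
    ‖∑ u, ∑ i, ∑ j, ∑ k, g u i j k‖ ≤ ∑ i, ∑ j, ∑ k, ‖∑ u, g u i j k‖ := by
  rw [sum_comm]
  refine (norm_sum_le _ _).trans (sum_le_sum fun i _ => ?_)
  rw [sum_comm]
  refine (norm_sum_le _ _).trans (sum_le_sum fun j _ => ?_)
  rw [sum_comm]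
  exact norm_sum_le _ _

namespace AddChar

section CommSemiring

variable {R M : Type*} [CommRing R] [CommSemiring M] (ψ : AddChar R M)

lemma sum_sum_sum_add_eq_pow_three {ι : Type*} [Fintype ι] (c : R) (f : ι → R) :
    ∑ i, ∑ j, ∑ k, ψ (c * (f i + f j + f k)) = (∑ i, ψ (c * f i)) ^ 3 := by
  simp_rw [pow_three, sum_mul_sum, mul_sum, mul_add, map_add_eq_mul, mul_assoc]

variable (H : Subgroup Rˣ) [Fintype H]

lemma sum_subgroup_mul_left (c : R) (u : H) :
    ∑ v : H, ψ (c * ((u : Rˣ) : R) * ((v : Rˣ) : R)) = ∑ v : H, ψ (c * ((v : Rˣ) : R)) :=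
  Fintype.sum_equiv (Equiv.mulLeft u) _ _ fun v => by simp [mul_assoc]

lemma sum_sum_subgroup_mul (c : R) :
    ∑ u : H, ∑ v : H, ψ (c * ((u : Rˣ) : R) * ((v : Rˣ) : R))
      = Nat.card H • ∑ v : H, ψ (c * ((v : Rˣ) : R)) := by
  simp only [sum_subgroup_mul_left, sum_const, card_univ, Nat.card_eq_fintype_card]

lemma sum_sum_sum_subgroup_mul_add (c : R) (u : H) :
    ∑ v₁ : H, ∑ v₂ : H, ∑ v₃ : H,
        ψ (c * ((u : Rˣ) : R) * (((v₁ : Rˣ) : R) + ((v₂ : Rˣ) : R) + ((v₃ : Rˣ) : R)))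
      = (∑ v : H, ψ (c * ((v : Rˣ) : R))) ^ 3 := by
  rw [sum_sum_sum_add_eq_pow_three, sum_subgroup_mul_left]

end CommSemiring

variable {R 𝕜 : Type*} [CommRing R] [RCLike 𝕜] (ψ : AddChar R 𝕜) (H : Subgroup Rˣ) [Fintype H]

lemma norm_sum_sum_subgroup_mul (c : R) :
    ‖∑ u : H, ∑ v : H, ψ (c * ((u : Rˣ) : R) * ((v : Rˣ) : R))‖
      = Nat.card H * ‖∑ v : H, ψ (c * ((v : Rˣ) : R))‖ := by
  rw [sum_sum_subgroup_mul, nsmul_eq_mul, norm_mul, RCLike.norm_natCast]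

lemma card_mul_norm_pow_three_le (c : R) :
    Nat.card H * ‖∑ v : H, ψ (c * ((v : Rˣ) : R))‖ ^ 3
      ≤ ∑ v₁ : H, ∑ v₂ : H, ∑ v₃ : H,
          ‖∑ u : H,
            ψ (c * ((u : Rˣ) : R) * (((v₁ : Rˣ) : R) + ((v₂ : Rˣ) : R) + ((v₃ : Rˣ) : R)))‖ := by
  refine le_of_eq_of_le ?_ (norm_sum_le_sum_sum_sum_norm _)
  simp only [sum_sum_sum_subgroup_mul_add, sum_const, card_univ, nsmul_eq_mul, norm_mul,
    RCLike.norm_natCast, norm_pow, Nat.card_eq_fintype_card]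

end AddChar

theorem stmt_11_general (p : ℕ) [Fact p.Prime] (H : Subgroup (ZMod p)ˣ) (a : (ZMod p)ˣ)
    (x : (ZMod p)ˣ) (Δ : ℝ)
    (hlow : ‖(∑ u : H, ∑ v : H,
        ep p ((a : ZMod p) * (x : ZMod p) * ((u : (ZMod p)ˣ) : ZMod p)
          * ((v : (ZMod p)ˣ) : ZMod p)))‖
      ≥ (Nat.card H : ℝ) ^ 2 * Δ) :
    ∑ v₁ : H, ∑ v₂ : H, ∑ v₃ : H,
        ‖(∑ u : H,
          ep p ((a : ZMod p) * (x : ZMod p) * ((u : (ZMod p)ˣ) : ZMod p)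
            * (((v₁ : (ZMod p)ˣ) : ZMod p) + ((v₂ : (ZMod p)ˣ) : ZMod p)
              + ((v₃ : (ZMod p)ˣ) : ZMod p))))‖
      ≥ (Nat.card H : ℝ) ^ 4 * Δ ^ 3 := by
  simp only [ep_eq_stdAddChar] at hlow ⊢
  set ψ : AddChar (ZMod p) ℂ := ZMod.stdAddChar
  set S := ∑ v : H, ψ ((a : ZMod p) * x * ((v : (ZMod p)ˣ) : ZMod p))
  set N : ℝ := (Nat.card H : ℝ)
  have hN : 0 < N := Nat.cast_pos.mpr Nat.card_pos
  have hS : N * Δ ≤ ‖S‖ := by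
    rw [ψ.norm_sum_sum_subgroup_mul] at hlow
    nlinarith
  calc N ^ 4 * Δ ^ 3 = N * (N * Δ) ^ 3 := by ring
    _ ≤ N * ‖S‖ ^ 3 := mul_le_mul_of_nonneg_left ((Odd.pow_le_pow (by decide)).mpr hS) hN.le
    _ ≤ _ := ψ.card_mul_norm_pow_three_le H _

theorem stmt_11 (p : ℕ) [Fact p.Prime] (H : Subgroup (ZMod p)ˣ) (a : (ZMod p)ˣ)
    (x : (ZMod p)ˣ) (Δ : ℝ) (hΔ : 0 < Δ)
    (hlow : ‖(∑ u : H, ∑ v : H,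
        ep p ((a : ZMod p) * (x : ZMod p) * ((u : (ZMod p)ˣ) : ZMod p)
          * ((v : (ZMod p)ˣ) : ZMod p)))‖
      ≥ (Nat.card H : ℝ) ^ 2 * Δ) :
    ∑ v₁ : H, ∑ v₂ : H, ∑ v₃ : H,
        ‖(∑ u : H,
          ep p ((a : ZMod p) * (x : ZMod p) * ((u : (ZMod p)ˣ) : ZMod p)
            * (((v₁ : (ZMod p)ˣ) : ZMod p) + ((v₂ : (ZMod p)ˣ) : ZMod p)
              + ((v₃ : (ZMod p)ˣ) : ZMod p))))‖
      ≥ (Nat.card H : ℝ) ^ 4 * Δ ^ 3 :=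
  stmt_11_general p H a x Δ hlow
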